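/- Let R(e₁,n₁;e₂,n₂) be the 4×4 matrix obtained by evaluating R̄ = exp[h(E⊗E + E⊗N + N⊗E)]·(1 − e^{Eh/2}ψ⁺ ⊗ e^{−Eh/2}ψ⁻) in the tensor product of the 2-dimensional U_h(gl(1|1))-modules T^κ_{e₁,n₁} ⊗ T^κ_{e₂,n₂}. Then R̄ intertwines the coproduct and opposite coproduct: R̄·Δ(x) = Δ^{op}(x)·R̄ for the generators x ∈ {E, N, ψ⁺, ψ⁻}, where Δ^{op} = (graded flip)∘Δ. -/

import Mathlib

open Matrix Kronecker

noncomputable section Uhgl11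

abbrev M2 := Matrix (Fin 2) (Fin 2) ℂ

def qψp (e h : ℂ) : M2 := !![0, 2 * Complex.sinh (h * e); 0, 0]
def qψm : M2 := !![0, 0; 1, 0]
def qN (n : ℂ) : M2 := !![n + 1/2, 0; 0, n - 1/2]
def Par2 : M2 := !![1, 0; 0, -1]

/-- The universal R-matrix
`R̄ = exp[h(E⊗E + E⊗N + N⊗E)]·(1 − e^{Eh/2}ψ⁺ ⊗ e^{−Eh/2}ψ⁻)` evaluated on
`T^κ_{e₁,n₁} ⊗ T^κ_{e₂,n₂}` (super tensor signs encoded via the parity operator). -/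
def Rmat (e₁ n₁ e₂ n₂ h : ℂ) : Matrix (Fin 2 × Fin 2) (Fin 2 × Fin 2) ℂ :=
  NormedSpace.exp (h • ((e₁ * e₂) • (1 : Matrix (Fin 2 × Fin 2) (Fin 2 × Fin 2) ℂ)
      + e₁ • ((1 : M2) ⊗ₖ qN n₂) + e₂ • (qN n₁ ⊗ₖ (1 : M2)))) *
    (1 - (Complex.exp (e₁ * h / 2) • (qψp e₁ h * Par2)) ⊗ₖ
          (Complex.exp (-(e₂ * h / 2)) • qψm))

/-- Coproduct of generators on `T^κ_{e₁,n₁} ⊗ T^κ_{e₂,n₂}`. -/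
def Δψp (e₁ e₂ h : ℂ) : Matrix (Fin 2 × Fin 2) (Fin 2 × Fin 2) ℂ :=
  Complex.exp (e₂ * h / 2) • (qψp e₁ h ⊗ₖ (1 : M2))
    + Complex.exp (-(e₁ * h / 2)) • (Par2 ⊗ₖ qψp e₂ h)
def Δψm (e₁ e₂ h : ℂ) : Matrix (Fin 2 × Fin 2) (Fin 2 × Fin 2) ℂ :=
  Complex.exp (e₂ * h / 2) • (qψm ⊗ₖ (1 : M2))
    + Complex.exp (-(e₁ * h / 2)) • (Par2 ⊗ₖ qψm)
def ΔN (n₁ n₂ : ℂ) : Matrix (Fin 2 × Fin 2) (Fin 2 × Fin 2) ℂ :=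
  qN n₁ ⊗ₖ (1 : M2) + (1 : M2) ⊗ₖ qN n₂
def ΔE (e₁ e₂ : ℂ) : Matrix (Fin 2 × Fin 2) (Fin 2 × Fin 2) ℂ := (e₁ + e₂) • 1

/-- Opposite coproduct `Δᵒᵖ = (graded flip)∘Δ` of the odd generators. -/
def Δψpop (e₁ e₂ h : ℂ) : Matrix (Fin 2 × Fin 2) (Fin 2 × Fin 2) ℂ :=
  Complex.exp (-(e₂ * h / 2)) • (qψp e₁ h ⊗ₖ (1 : M2))
    + Complex.exp (e₁ * h / 2) • (Par2 ⊗ₖ qψp e₂ h)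
def Δψmop (e₁ e₂ h : ℂ) : Matrix (Fin 2 × Fin 2) (Fin 2 × Fin 2) ℂ :=
  Complex.exp (-(e₂ * h / 2)) • (qψm ⊗ₖ (1 : M2))
    + Complex.exp (e₁ * h / 2) • (Par2 ⊗ₖ qψm)

/-! `R̄ = exp K · (1 - X)` with `K = h(E⊗E + E⊗N + N⊗E)` and `X = e^{Eh/2}ψ⁺ ⊗ e^{-Eh/2}ψ⁻`.
`Δ(E)` is a scalar, and both factors have `ad(N ⊗ 1 + 1 ⊗ N)`-weight zero, so they commute with
`Δ(N)`. The odd generators are `ad N`-eigenvectors of weight `±1`, so moving `exp K` past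
`Δ(ψ^±)` rescales its two terms by `e^{±h e₂}` and `e^{±h e₁}`. The result agrees with
`Δᵒᵖ(ψ^±)` up to a defect of the form `(const) · 2 sinh(h e)` in one coefficient, and `1 - X`
supplies exactly this defect because `ψ⁺ψ⁻ + ψ⁻ψ⁺ = 2 sinh(h e)` on `T_{e,n}`. -/

open NormedSpace

attribute [local instance] LieRing.ofAssociativeRing

theorem exp_mul_eq_smul_mul_exp_of_lie_eq_smul {𝔸 : Type*} [NormedRing 𝔸] [NormedAlgebra ℂ 𝔸]
    [CompleteSpace 𝔸] {H A : 𝔸} {k : ℂ} (h : ⁅H, A⁆ = k • A) :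
    exp H * A = Complex.exp k • (A * exp H) := by
  let : NormedAlgebra ℚ 𝔸 := NormedAlgebra.restrictScalars ℚ ℂ 𝔸
  have hsemi : SemiconjBy A (H + algebraMap ℂ 𝔸 k) H := by
    rw [Ring.lie_def, sub_eq_iff_eq_add] at h
    rw [SemiconjBy, mul_add, ← Algebra.commutes, ← Algebra.smul_def, h, add_comm]
  rw [← hsemi.exp_right, exp_add_of_commute (Algebra.commutes k H).symm, ← algebraMap_exp_comm,
    ← Complex.exp_eq_exp_ℂ, ← Algebra.commutes, ← mul_assoc, Algebra.smul_def,
    ← Algebra.commutes (Complex.exp k) A, mul_assoc]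

-- `exp` only depends on the topology, so any normed-algebra structure on matrices will do.
theorem Matrix.exp_mul_eq_smul_mul_exp_of_lie_eq_smul {ι : Type*} [Fintype ι] [DecidableEq ι]
    {H A : Matrix ι ι ℂ} {k : ℂ} (h : ⁅H, A⁆ = k • A) :
    exp H * A = Complex.exp k • (A * exp H) :=
  let := Matrix.linftyOpNormedRing (n := ι) (α := ℂ)
  let := Matrix.linftyOpNormedAlgebra (n := ι) (R := ℂ) (α := ℂ)
  _root_.exp_mul_eq_smul_mul_exp_of_lie_eq_smul h

section Kronecker

variable {α ι κ : Type*} [CommRing α] [Fintype ι] [Fintype κ]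

theorem Matrix.kronecker_one_lie_kronecker [DecidableEq κ] (A B : Matrix ι ι α)
    (C : Matrix κ κ α) : ⁅A ⊗ₖ (1 : Matrix κ κ α), B ⊗ₖ C⁆ = ⁅A, B⁆ ⊗ₖ C := by
  rw [Ring.lie_def, Ring.lie_def, ← mul_kronecker_mul, ← mul_kronecker_mul, one_mul, mul_one]
  ext; simp [sub_mul]

theorem Matrix.one_kronecker_lie_kronecker [DecidableEq ι] (A C : Matrix κ κ α)
    (B : Matrix ι ι α) : ⁅(1 : Matrix ι ι α) ⊗ₖ A, B ⊗ₖ C⁆ = B ⊗ₖ ⁅A, C⁆ := by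
  rw [Ring.lie_def, Ring.lie_def, ← mul_kronecker_mul, ← mul_kronecker_mul, one_mul, mul_one]
  ext; simp [mul_sub]

end Kronecker

theorem lie_qN_qψp (n e h : ℂ) : ⁅qN n, qψp e h⁆ = qψp e h := by
  ext i j; fin_cases i <;> fin_cases j <;> simp [Ring.lie_def, qN, qψp]; ring

theorem lie_qN_qψp_mul_Par2 (n e h : ℂ) : ⁅qN n, qψp e h * Par2⁆ = qψp e h * Par2 := by
  ext i j; fin_cases i <;> fin_cases j <;> simp [Ring.lie_def, qN, qψp, Par2]; ring

theorem lie_qN_qψm (n : ℂ) : ⁅qN n, qψm⁆ = -qψm := by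
  ext i j; fin_cases i <;> fin_cases j <;> simp [Ring.lie_def, qN, qψm]; ring

theorem lie_qN_Par2 (n : ℂ) : ⁅qN n, Par2⁆ = 0 := by
  ext i j; fin_cases i <;> fin_cases j <;> simp [Ring.lie_def, qN, Par2]

theorem lie_qN_one (n : ℂ) : ⁅qN n, (1 : M2)⁆ = 0 :=
  commute_iff_lie_eq.mp (Commute.one_right _)

def rExponent (e₁ n₁ e₂ n₂ h : ℂ) : Matrix (Fin 2 × Fin 2) (Fin 2 × Fin 2) ℂ :=
  h • ((e₁ * e₂) • (1 : Matrix (Fin 2 × Fin 2) (Fin 2 × Fin 2) ℂ)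
      + e₁ • ((1 : M2) ⊗ₖ qN n₂) + e₂ • (qN n₁ ⊗ₖ (1 : M2)))

def rOdd (e₁ e₂ h : ℂ) : Matrix (Fin 2 × Fin 2) (Fin 2 × Fin 2) ℂ :=
  (Complex.exp (e₁ * h / 2) • (qψp e₁ h * Par2)) ⊗ₖ (Complex.exp (-(e₂ * h / 2)) • qψm)

theorem Rmat_eq (e₁ n₁ e₂ n₂ h : ℂ) :
    Rmat e₁ n₁ e₂ n₂ h = exp (rExponent e₁ n₁ e₂ n₂ h) * (1 - rOdd e₁ e₂ h) := rfl

theorem lie_rExponent_kronecker {e₁ n₁ e₂ n₂ h a b : ℂ} {A B : M2}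
    (hA : ⁅qN n₁, A⁆ = a • A) (hB : ⁅qN n₂, B⁆ = b • B) :
    ⁅rExponent e₁ n₁ e₂ n₂ h, A ⊗ₖ B⁆ = (h * (e₂ * a + e₁ * b)) • (A ⊗ₖ B) := by
  have hOne : ⁅(1 : Matrix (Fin 2 × Fin 2) (Fin 2 × Fin 2) ℂ), A ⊗ₖ B⁆ = 0 :=
    commute_iff_lie_eq.mp (Commute.one_left _)
  simp only [rExponent, smul_lie, add_lie, kronecker_one_lie_kronecker,
    one_kronecker_lie_kronecker, hA, hB, smul_kronecker, kronecker_smul, hOne, smul_zero,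
    zero_add]
  module

theorem exp_rExponent_mul_kronecker {e₁ n₁ e₂ n₂ h a b : ℂ} {A B : M2}
    (hA : ⁅qN n₁, A⁆ = a • A) (hB : ⁅qN n₂, B⁆ = b • B) :
    exp (rExponent e₁ n₁ e₂ n₂ h) * (A ⊗ₖ B)
      = Complex.exp (h * (e₂ * a + e₁ * b)) • ((A ⊗ₖ B) * exp (rExponent e₁ n₁ e₂ n₂ h)) :=
  Matrix.exp_mul_eq_smul_mul_exp_of_lie_eq_smul (lie_rExponent_kronecker hA hB)

theorem lie_ΔN_kronecker {n₁ n₂ a b : ℂ} {A B : M2}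
    (hA : ⁅qN n₁, A⁆ = a • A) (hB : ⁅qN n₂, B⁆ = b • B) :
    ⁅ΔN n₁ n₂, A ⊗ₖ B⁆ = (a + b) • (A ⊗ₖ B) := by
  simp only [ΔN, add_lie, kronecker_one_lie_kronecker, one_kronecker_lie_kronecker, hA, hB,
    smul_kronecker, kronecker_smul, add_smul]

theorem commute_exp_rExponent_ΔN (e₁ n₁ e₂ n₂ h : ℂ) :
    Commute (exp (rExponent e₁ n₁ e₂ n₂ h)) (ΔN n₁ n₂) := by
  have h₁ : ⁅qN n₁, qN n₁⁆ = (0 : ℂ) • qN n₁ := by rw [zero_smul, lie_self]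
  have h₂ : ⁅qN n₂, qN n₂⁆ = (0 : ℂ) • qN n₂ := by rw [zero_smul, lie_self]
  have hOne₁ : ⁅qN n₁, (1 : M2)⁆ = (0 : ℂ) • 1 := by rw [zero_smul, lie_qN_one]
  have hOne₂ : ⁅qN n₂, (1 : M2)⁆ = (0 : ℂ) • 1 := by rw [zero_smul, lie_qN_one]
  simp only [Commute, SemiconjBy, ΔN, mul_add, add_mul, exp_rExponent_mul_kronecker h₁ hOne₂,
    exp_rExponent_mul_kronecker hOne₁ h₂, mul_zero, add_zero, Complex.exp_zero, one_smul]

theorem commute_rOdd_ΔN (e₁ n₁ e₂ n₂ h : ℂ) : Commute (rOdd e₁ e₂ h) (ΔN n₁ n₂) := by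
  have hψp : ⁅qN n₁, Complex.exp (e₁ * h / 2) • (qψp e₁ h * Par2)⁆
      = (1 : ℂ) • (Complex.exp (e₁ * h / 2) • (qψp e₁ h * Par2)) := by
    rw [lie_smul, lie_qN_qψp_mul_Par2, one_smul]
  have hψm : ⁅qN n₂, Complex.exp (-(e₂ * h / 2)) • qψm⁆
      = (-1 : ℂ) • (Complex.exp (-(e₂ * h / 2)) • qψm) := by
    rw [lie_smul, lie_qN_qψm, smul_neg, neg_one_smul]
  rw [Commute.symm_iff, commute_iff_lie_eq, rOdd, lie_ΔN_kronecker hψp hψm, add_neg_cancel,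
    zero_smul]

theorem Rmat_mul_ΔN (e₁ n₁ e₂ n₂ h : ℂ) :
    Rmat e₁ n₁ e₂ n₂ h * ΔN n₁ n₂ = ΔN n₁ n₂ * Rmat e₁ n₁ e₂ n₂ h :=
  ((commute_exp_rExponent_ΔN e₁ n₁ e₂ n₂ h).mul_left
    ((Commute.one_left _).sub_left (commute_rOdd_ΔN e₁ n₁ e₂ n₂ h))).eq

def oddCoproduct (X₁ X₂ : M2) (α β : ℂ) : Matrix (Fin 2 × Fin 2) (Fin 2 × Fin 2) ℂ :=
  α • (X₁ ⊗ₖ (1 : M2)) + β • (Par2 ⊗ₖ X₂)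

theorem Δψp_eq (e₁ e₂ h : ℂ) : Δψp e₁ e₂ h = oddCoproduct (qψp e₁ h) (qψp e₂ h)
    (Complex.exp (e₂ * h / 2)) (Complex.exp (-(e₁ * h / 2))) := rfl

theorem Δψpop_eq (e₁ e₂ h : ℂ) : Δψpop e₁ e₂ h = oddCoproduct (qψp e₁ h) (qψp e₂ h)
    (Complex.exp (-(e₂ * h / 2))) (Complex.exp (e₁ * h / 2)) := rfl

theorem Δψm_eq (e₁ e₂ h : ℂ) : Δψm e₁ e₂ h = oddCoproduct qψm qψm
    (Complex.exp (e₂ * h / 2)) (Complex.exp (-(e₁ * h / 2))) := rfl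

theorem Δψmop_eq (e₁ e₂ h : ℂ) : Δψmop e₁ e₂ h = oddCoproduct qψm qψm
    (Complex.exp (-(e₂ * h / 2))) (Complex.exp (e₁ * h / 2)) := rfl

theorem exp_rExponent_mul_oddCoproduct {e₁ n₁ e₂ n₂ h a : ℂ} {X₁ X₂ : M2}
    (h₁ : ⁅qN n₁, X₁⁆ = a • X₁) (h₂ : ⁅qN n₂, X₂⁆ = a • X₂) (α β : ℂ) :
    exp (rExponent e₁ n₁ e₂ n₂ h) * oddCoproduct X₁ X₂ α β
      = oddCoproduct X₁ X₂ (Complex.exp (h * e₂ * a) * α) (Complex.exp (h * e₁ * a) * β)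
          * exp (rExponent e₁ n₁ e₂ n₂ h) := by
  have hOne : ⁅qN n₂, (1 : M2)⁆ = (0 : ℂ) • 1 := by rw [zero_smul, lie_qN_one]
  have hPar : ⁅qN n₁, Par2⁆ = (0 : ℂ) • Par2 := by rw [zero_smul, lie_qN_Par2]
  simp only [oddCoproduct, mul_add, add_mul, mul_smul_comm, smul_mul_assoc, smul_smul,
    exp_rExponent_mul_kronecker h₁ hOne, exp_rExponent_mul_kronecker hPar h₂]
  ring_nf

-- `X` kills `ψ⁺ ⊗ 1` from both sides, and `[X, P ⊗ ψ⁺] = c · ψ⁺ ⊗ {ψ⁻, ψ⁺}`.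
theorem one_sub_rOdd_mul_oddCoproduct_qψp (e₁ e₂ h α β : ℂ) :
    (1 - rOdd e₁ e₂ h) * oddCoproduct (qψp e₁ h) (qψp e₂ h) α β
      = oddCoproduct (qψp e₁ h) (qψp e₂ h)
          (α - Complex.exp (e₁ * h / 2) * Complex.exp (-(e₂ * h / 2)) * β
            * (2 * Complex.sinh (h * e₂))) β * (1 - rOdd e₁ e₂ h) := by
  ext ⟨i, j⟩ ⟨k, l⟩
  fin_cases i <;> fin_cases j <;> fin_cases k <;> fin_cases l <;>
    simp [rOdd, oddCoproduct, qψp, qψm, Par2, Matrix.mul_apply, Fintype.sum_prod_type,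
      Matrix.one_apply] <;> ring

-- `X` kills `P ⊗ ψ⁻` from both sides, and `[X, ψ⁻ ⊗ 1] = -c · {ψ⁺, ψ⁻} P ⊗ ψ⁻`.
theorem one_sub_rOdd_mul_oddCoproduct_qψm (e₁ e₂ h α β : ℂ) :
    (1 - rOdd e₁ e₂ h) * oddCoproduct qψm qψm α β
      = oddCoproduct qψm qψm α
          (β + Complex.exp (e₁ * h / 2) * Complex.exp (-(e₂ * h / 2)) * α
            * (2 * Complex.sinh (h * e₁))) * (1 - rOdd e₁ e₂ h) := by
  ext ⟨i, j⟩ ⟨k, l⟩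
  fin_cases i <;> fin_cases j <;> fin_cases k <;> fin_cases l <;>
    simp [rOdd, oddCoproduct, qψp, qψm, Par2, Matrix.mul_apply, Fintype.sum_prod_type,
      Matrix.one_apply] <;> ring

theorem Complex.exp_mul_eq_exp_mul_div_two_sq (e h : ℂ) :
    Complex.exp (h * e) = Complex.exp (e * h / 2) ^ 2 := by
  rw [← Complex.exp_nat_mul]; ring_nf

theorem Rmat_mul_Δψp (e₁ n₁ e₂ n₂ h : ℂ) :
    Rmat e₁ n₁ e₂ n₂ h * Δψp e₁ e₂ h = Δψpop e₁ e₂ h * Rmat e₁ n₁ e₂ n₂ h := by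
  have h₁ : ⁅qN n₁, qψp e₁ h⁆ = (1 : ℂ) • qψp e₁ h := by rw [lie_qN_qψp, one_smul]
  have h₂ : ⁅qN n₂, qψp e₂ h⁆ = (1 : ℂ) • qψp e₂ h := by rw [lie_qN_qψp, one_smul]
  rw [Rmat_eq, mul_assoc, Δψp_eq, one_sub_rOdd_mul_oddCoproduct_qψp, ← mul_assoc,
    exp_rExponent_mul_oddCoproduct h₁ h₂, mul_assoc, Δψpop_eq]
  congr 3
  · simp only [mul_one, Complex.exp_neg, Complex.two_sinh, Complex.exp_mul_eq_exp_mul_div_two_sq]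
    field_simp
    ring
  · simp only [mul_one, Complex.exp_neg, Complex.exp_mul_eq_exp_mul_div_two_sq]
    field_simp

theorem Rmat_mul_Δψm (e₁ n₁ e₂ n₂ h : ℂ) :
    Rmat e₁ n₁ e₂ n₂ h * Δψm e₁ e₂ h = Δψmop e₁ e₂ h * Rmat e₁ n₁ e₂ n₂ h := by
  have h₁ : ⁅qN n₁, qψm⁆ = (-1 : ℂ) • qψm := by rw [lie_qN_qψm, neg_one_smul]
  have h₂ : ⁅qN n₂, qψm⁆ = (-1 : ℂ) • qψm := by rw [lie_qN_qψm, neg_one_smul]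
  rw [Rmat_eq, mul_assoc, Δψm_eq, one_sub_rOdd_mul_oddCoproduct_qψm, ← mul_assoc,
    exp_rExponent_mul_oddCoproduct h₁ h₂, mul_assoc, Δψmop_eq]
  congr 3
  · simp only [mul_neg, mul_one, Complex.exp_neg, Complex.exp_mul_eq_exp_mul_div_two_sq]
    field_simp
  · simp only [mul_neg, mul_one, Complex.exp_neg, Complex.two_sinh,
      Complex.exp_mul_eq_exp_mul_div_two_sq]
    field_simp
    ring

/-- The evaluated universal R-matrix intertwines the coproduct and
the opposite coproduct on the generators: `R̄ Δ(x) = Δᵒᵖ(x) R̄` for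
`x ∈ {E, N, ψ⁺, ψ⁻}` (note `Δᵒᵖ(E) = Δ(E)`, `Δᵒᵖ(N) = Δ(N)`). -/
theorem stmt18 (e₁ n₁ e₂ n₂ h : ℂ) :
    Rmat e₁ n₁ e₂ n₂ h * ΔE e₁ e₂ = ΔE e₁ e₂ * Rmat e₁ n₁ e₂ n₂ h ∧
    Rmat e₁ n₁ e₂ n₂ h * ΔN n₁ n₂ = ΔN n₁ n₂ * Rmat e₁ n₁ e₂ n₂ h ∧
    Rmat e₁ n₁ e₂ n₂ h * Δψp e₁ e₂ h = Δψpop e₁ e₂ h * Rmat e₁ n₁ e₂ n₂ h ∧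
    Rmat e₁ n₁ e₂ n₂ h * Δψm e₁ e₂ h = Δψmop e₁ e₂ h * Rmat e₁ n₁ e₂ n₂ h :=
  ⟨((Commute.one_right _).smul_right _).eq, Rmat_mul_ΔN e₁ n₁ e₂ n₂ h,
    Rmat_mul_Δψp e₁ n₁ e₂ n₂ h, Rmat_mul_Δψm e₁ n₁ e₂ n₂ h⟩

end Uhgl11
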